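/- arXiv:1506.02464 — 5 statements merged into one kernel-verified Lean document; each statement's English description precedes it below -/
import Mathlib

section
/- Let G be a group and let N be a subgroup of G that is invariant under every automorphism of G (in particular N is normal). If the quotient group G/N possesses the R∞-property, then G possesses the R∞-property. -/
/-- Two elements are twisted conjugate with respect to an endomorphism `φ` if
`x = z * y * (φ z)⁻¹` for some `z`. -/
def twistedConj {G : Type*} [Group G] (φ : G →* G) (x y : G) : Prop :=
  ∃ z : G, x = z * y * (φ z)⁻¹

/-- The Reidemeister number of `φ` is infinite: the set of `φ`-twisted conjugacy
classes (the quotient of `G` by twisted conjugacy) is infinite. -/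
def ReidemeisterInfinite {G : Type*} [Group G] (φ : G →* G) : Prop :=
  Infinite (Quot (twistedConj φ))

/-- A group has the `R∞`-property if every automorphism has infinite Reidemeister number. -/
def RinftyProperty (G : Type*) [Group G] : Prop :=
  ∀ φ : G ≃* G, ReidemeisterInfinite (φ : G →* G)

/-- If `N` is a subgroup of `G` invariant under every automorphism of `G`
(in particular normal) and `G/N` has the `R∞`-property, then so does `G`. -/
theorem rInfty_of_quotient {G : Type*} [Group G] (N : Subgroup G) [N.Normal]
    (hchar : ∀ φ : G ≃* G, N.map (φ : G →* G) = N)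
    (hA : RinftyProperty (G ⧸ N)) : RinftyProperty G := by
  intro φ
  set ψ : (G ⧸ N) ≃* (G ⧸ N) := QuotientGroup.congr N N φ (hchar φ) with hψ
  have hinf : Infinite (Quot (twistedConj (ψ : (G ⧸ N) →* (G ⧸ N)))) := hA ψ
  have hf : ∀ x y : G, twistedConj (φ : G →* G) x y →
      Quot.mk (twistedConj (ψ : (G ⧸ N) →* (G ⧸ N))) (↑x : G ⧸ N) =
      Quot.mk (twistedConj (ψ : (G ⧸ N) →* (G ⧸ N))) (↑y : G ⧸ N) := by
    rintro x y ⟨z, rfl⟩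
    apply Quot.sound
    exact ⟨(z : G ⧸ N), rfl⟩
  let f : Quot (twistedConj (φ : G →* G)) → Quot (twistedConj (ψ : (G ⧸ N) →* (G ⧸ N))) :=
    Quot.lift (fun g => Quot.mk _ (↑g : G ⧸ N)) hf
  have hsurj : Function.Surjective f := by
    intro q
    obtain ⟨g, rfl⟩ := Quot.exists_rep q
    obtain ⟨x, rfl⟩ := QuotientGroup.mk_surjective g
    exact ⟨Quot.mk _ x, rfl⟩
  exact Infinite.of_surjective f hsurj
end

section
/- Let G be a group and let N be a subgroup of G that is invariant under every automorphism of G (in particular N is normal). If the quotient group G/N possesses the S∞-property, then G possesses the S∞-property. -/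
/-- Two automorphisms `a`, `b` are isogredient if `b = φ_h ∘ a ∘ φ_h⁻¹`
for some inner automorphism `φ_h`. -/
def Isogredient {G : Type*} [Group G] (a b : G ≃* G) : Prop :=
  ∃ h : G, b = (MulAut.conj h) * a * (MulAut.conj h)⁻¹

/-- `S(φ)` is infinite: the set of isogredience classes of automorphisms in
the coset `{φ_g ∘ φ : g ∈ G}` of `Inn(G)` is infinite. -/
def SInfinite {G : Type*} [Group G] (φ : G ≃* G) : Prop :=
  Infinite (Quot (fun a b : {ψ : G ≃* G // ∃ g : G, ψ = MulAut.conj g * φ} =>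
    Isogredient a.1 b.1))

/-- A group has the `S∞`-property if `S(φ)` is infinite for every automorphism `φ`. -/
def SinftyProperty (G : Type*) [Group G] : Prop :=
  ∀ φ : G ≃* G, SInfinite φ

section Aux

variable {G : Type*} [Group G] (N : Subgroup G) [N.Normal]
  (hchar : ∀ φ : G ≃* G, N.map (φ : G →* G) = N)

/-- Descend an automorphism of `G` to one of `G ⧸ N`. -/
noncomputable def liftAut (ψ : G ≃* G) : (G ⧸ N) ≃* (G ⧸ N) :=
  QuotientGroup.congr N N ψ (hchar ψ)

theorem liftAut_mk (ψ : G ≃* G) (x : G) :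
    liftAut N hchar ψ (QuotientGroup.mk x) = QuotientGroup.mk (ψ x) := rfl

theorem liftAut_mul (a b : G ≃* G) :
    liftAut N hchar (a * b) = liftAut N hchar a * liftAut N hchar b := by
  ext x
  induction x using QuotientGroup.induction_on with
  | H x => simp [liftAut_mk]

theorem liftAut_conj (h : G) :
    liftAut N hchar (MulAut.conj h) = MulAut.conj (QuotientGroup.mk h : G ⧸ N) := by
  ext x
  induction x using QuotientGroup.induction_on with
  | H x => simp [liftAut_mk]

theorem liftAut_conj_inv (h : G) :
    liftAut N hchar (MulAut.conj h)⁻¹ = (MulAut.conj (QuotientGroup.mk h : G ⧸ N))⁻¹ := by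
  ext x
  induction x using QuotientGroup.induction_on with
  | H x => simp [liftAut_mk]

end Aux

/-- If `N` is a subgroup of `G` invariant under every automorphism of `G`
(in particular normal) and `G/N` has the `S∞`-property, then so does `G`. -/
theorem sInfty_of_quotient {G : Type*} [Group G] (N : Subgroup G) [N.Normal]
    (hchar : ∀ φ : G ≃* G, N.map (φ : G →* G) = N)
    (hA : SinftyProperty (G ⧸ N)) : SinftyProperty G := by
  intro φ
  set L : (G ≃* G) → ((G ⧸ N) ≃* (G ⧸ N)) := liftAut N hchar with hL
  haveI : SInfinite (L φ) := hA (L φ)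
  unfold SInfinite at this ⊢
  -- the map between subtypes
  set F : {ψ : G ≃* G // ∃ g : G, ψ = MulAut.conj g * φ} →
      {ψ' : (G ⧸ N) ≃* (G ⧸ N) // ∃ g : G ⧸ N, ψ' = MulAut.conj g * L φ} :=
    fun ψ => ⟨L ψ.1, by
      obtain ⟨g, hg⟩ := ψ.2
      exact ⟨QuotientGroup.mk g, by
        rw [hL, hg, liftAut_mul, liftAut_conj]⟩⟩ with hF
  have hresp : ∀ a b, Isogredient a.1 b.1 →
      Quot.mk _ (F a) = Quot.mk
        (fun a b : {ψ' : (G ⧸ N) ≃* (G ⧸ N) // ∃ g : G ⧸ N, ψ' = MulAut.conj g * L φ} =>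
          Isogredient a.1 b.1) (F b) := by
    intro a b ⟨h, hh⟩
    apply Quot.sound
    exact ⟨QuotientGroup.mk h, by
      simp only [hF, hL, hh, liftAut_mul, liftAut_conj, liftAut_conj_inv]⟩
  let Fbar := Quot.lift (fun a => Quot.mk
      (fun a b : {ψ' : (G ⧸ N) ≃* (G ⧸ N) // ∃ g : G ⧸ N, ψ' = MulAut.conj g * L φ} =>
        Isogredient a.1 b.1) (F a)) hresp
  have hsurj : Function.Surjective Fbar := by
    intro y
    obtain ⟨⟨ψ', g', hg'⟩, rfl⟩ := Quot.exists_rep y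
    obtain ⟨g, rfl⟩ := QuotientGroup.mk_surjective g'
    refine ⟨Quot.mk _ ⟨MulAut.conj g * φ, g, rfl⟩, ?_⟩
    have : F ⟨MulAut.conj g * φ, g, rfl⟩ = ⟨ψ', _, hg'⟩ := by
      apply Subtype.ext
      simp only [hF, hL, hg', liftAut_mul, liftAut_conj]
    show Quot.mk _ (F _) = _
    rw [this]
  exact @Infinite.of_injective _ _ this _ (Function.injective_surjInv hsurj)
end

section
/- Let G be a group whose center Z(G) is finite. Then G possesses the R∞-property if and only if G possesses the S∞-property. -/
section Aux
variable {G : Type*} [Group G]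

lemma twistedConj_equiv (φ : G →* G) : Equivalence (twistedConj φ) := by
  constructor
  · intro x; exact ⟨1, by simp⟩
  · rintro x y ⟨z, rfl⟩
    exact ⟨z⁻¹, by simp [mul_assoc]⟩
  · rintro x y z ⟨a, rfl⟩ ⟨b, rfl⟩
    exact ⟨a * b, by simp [mul_assoc]⟩

lemma isog_equiv : Equivalence (Isogredient (G := G)) := by
  constructor
  · intro a; exact ⟨1, by simp⟩
  · rintro a b ⟨h, rfl⟩
    refine ⟨h⁻¹, ?_⟩
    simp [mul_assoc]
  · rintro a b c ⟨h, rfl⟩ ⟨k, rfl⟩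
    refine ⟨k * h, ?_⟩
    simp [mul_assoc]

lemma conj_key (φ : G ≃* G) (h g : G) :
    MulAut.conj h * (MulAut.conj g * φ) * (MulAut.conj h)⁻¹
      = MulAut.conj (h * g * (φ h)⁻¹) * φ := by
  ext x
  simp [mul_assoc]

lemma center_of_conj_eq {a b : G} (hab : MulAut.conj a = MulAut.conj b) :
    a * b⁻¹ ∈ Subgroup.center G := by
  rw [Subgroup.mem_center_iff]
  intro g
  have := congrArg (fun ψ : MulAut G => ψ (b⁻¹ * g * b)) hab
  simp only [MulAut.conj_apply] at this
  have h2 : a * (b⁻¹ * g * b) * a⁻¹ = g := by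
    rw [this]; group
  calc g * (a * b⁻¹) = (a * (b⁻¹ * g * b) * a⁻¹) * (a * b⁻¹) := by rw [h2]
    _ = a * b⁻¹ * g := by group

/-- The coset representative map. -/
def toCoset (φ : G ≃* G) (g : G) : {ψ : G ≃* G // ∃ g : G, ψ = MulAut.conj g * φ} :=
  ⟨MulAut.conj g * φ, g, rfl⟩

lemma srel_equiv (φ : G ≃* G) :
    Equivalence (fun a b : {ψ : G ≃* G // ∃ g : G, ψ = MulAut.conj g * φ} =>
      Isogredient a.1 b.1) :=
  ⟨fun a => isog_equiv.refl a.1, fun h => isog_equiv.symm h,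
    fun h h' => isog_equiv.trans h h'⟩

lemma sound_part (φ : G ≃* G) {x y : G} (hxy : twistedConj (φ : G →* G) x y) :
    Isogredient (toCoset φ x).1 (toCoset φ y).1 := by
  obtain ⟨z, rfl⟩ := hxy
  refine ⟨z⁻¹, ?_⟩
  show MulAut.conj y * φ
      = MulAut.conj z⁻¹ * (MulAut.conj (z * y * ((φ : G →* G) z)⁻¹) * φ) * (MulAut.conj z⁻¹)⁻¹
  rw [conj_key]
  have : z⁻¹ * (z * y * ((φ : G →* G) z)⁻¹) * (φ z⁻¹)⁻¹ = y := by
    simp [mul_assoc]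
  rw [this]

lemma surj_part (φ : G ≃* G)
    (s : Quot (fun a b : {ψ : G ≃* G // ∃ g : G, ψ = MulAut.conj g * φ} =>
      Isogredient a.1 b.1)) :
    ∃ g : G, Quot.mk _ (toCoset φ g) = s := by
  induction s using Quot.ind with
  | _ a =>
    obtain ⟨ψ, g, hg⟩ := a
    exact ⟨g, congrArg (Quot.mk _) (Subtype.ext hg.symm)⟩

lemma sinf_imp_rinf (φ : G ≃* G) (h : SInfinite φ) : ReidemeisterInfinite (φ : G →* G) := by
  haveI : Infinite (Quot (fun a b : {ψ : G ≃* G // ∃ g : G, ψ = MulAut.conj g * φ} =>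
      Isogredient a.1 b.1)) := h
  refine Infinite.of_surjective
    (Quot.lift (fun g => Quot.mk
        (fun a b : {ψ : G ≃* G // ∃ g : G, ψ = MulAut.conj g * φ} => Isogredient a.1 b.1)
        (toCoset φ g))
      (fun x y hxy => Quot.sound (sound_part φ hxy))) ?_
  intro s
  obtain ⟨g, hg⟩ := surj_part φ s
  exact ⟨Quot.mk _ g, hg⟩

lemma rinf_imp_sinf [Finite (Subgroup.center G)] (φ : G ≃* G)
    (h : ReidemeisterInfinite (φ : G →* G)) : SInfinite φ := by
  unfold SInfinite
  rw [← not_finite_iff_infinite]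
  intro hfin
  haveI : Infinite (Quot (twistedConj (φ : G →* G))) := h
  haveI := hfin
  set SQ := Quot (fun a b : {ψ : G ≃* G // ∃ g : G, ψ = MulAut.conj g * φ} =>
      Isogredient a.1 b.1) with hSQ
  have rep : ∀ s : SQ, ∃ g : G, Quot.mk _ (toCoset φ g) = s := surj_part φ
  choose r hr using rep
  have psurj : Function.Surjective
      (fun p : Subgroup.center G × SQ =>
        Quot.mk (twistedConj (φ : G →* G)) (p.1.1 * r p.2)) := by
    intro q
    induction q using Quot.ind with
    | _ g =>
      set s : SQ := Quot.mk _ (toCoset φ g) with hs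
      have h1 : Quot.mk _ (toCoset φ (r s)) = Quot.mk _ (toCoset φ g) := hr s
      rw [Quot.eq] at h1
      have h2 : Isogredient (toCoset φ (r s)).1 (toCoset φ g).1 :=
        ((srel_equiv φ).eqvGen_iff).mp h1
      obtain ⟨k, hk⟩ := h2
      simp only [toCoset] at hk
      rw [conj_key] at hk
      have hc : MulAut.conj g = MulAut.conj (k * r s * (φ k)⁻¹) := mul_right_cancel hk
      have hz : g * (k * r s * (φ k)⁻¹)⁻¹ ∈ Subgroup.center G := center_of_conj_eq hc
      refine ⟨(⟨g * (k * r s * (φ k)⁻¹)⁻¹, hz⟩, s), ?_⟩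
      refine Quot.sound ?_
      refine ⟨k⁻¹, ?_⟩
      have hcomm : k⁻¹ * (g * (k * r s * (φ k)⁻¹)⁻¹) = (g * (k * r s * (φ k)⁻¹)⁻¹) * k⁻¹ :=
        Subgroup.mem_center_iff.mp hz k⁻¹
      show g * (k * r s * (φ k)⁻¹)⁻¹ * r s = k⁻¹ * g * ((φ : G →* G) k⁻¹)⁻¹
      have hφ : ((φ : G →* G) k⁻¹)⁻¹ = φ k := by simp
      rw [hφ]
      calc g * (k * r s * (φ k)⁻¹)⁻¹ * r s
          = (g * (k * r s * (φ k)⁻¹)⁻¹) * k⁻¹ * (k * r s * (φ k)⁻¹) * (φ k) := by group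
        _ = k⁻¹ * (g * (k * r s * (φ k)⁻¹)⁻¹) * (k * r s * (φ k)⁻¹) * (φ k) := by
            rw [← hcomm]
        _ = k⁻¹ * g * φ k := by group
  haveI : Finite (Quot (twistedConj (φ : G →* G))) := Finite.of_surjective _ psurj
  exact not_finite (Quot (twistedConj (φ : G →* G)))

end Aux

/-- If the center of `G` is finite, then `G` has the `R∞`-property if and only if it
has the `S∞`-property. -/
theorem rInfty_iff_sInfty_of_finite_center {G : Type*} [Group G]
    (hZ : Finite (Subgroup.center G)) :
    RinftyProperty G ↔ SinftyProperty G := by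
  constructor
  · intro hR φ
    exact rinf_imp_sinf φ (hR φ)
  · intro hS φ
    exact sinf_imp_rinf φ (hS φ)
end

section
/- Let G be a group and let φ be an automorphism of G. Since the center Z(G) is invariant under every automorphism, φ induces an automorphism φ̄ of the quotient G/Z(G). Then the number of isogredience classes of automorphisms in the coset {φ_g ∘ φ : g ∈ G} equals the Reidemeister number R(φ̄) of φ̄, i.e., there is a bijection between the set of these isogredience classes and the set of φ̄-twisted conjugacy classes of G/Z(G). -/
section
variable {G : Type*} [Group G]

lemma myconj_eq_iff (g c : G) :
    MulAut.conj g = MulAut.conj c ↔ g⁻¹ * c ∈ Subgroup.center G := by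
  rw [Subgroup.mem_center_iff]
  constructor
  · intro h x
    have hx : g * x * g⁻¹ = c * x * c⁻¹ := by
      have := congrArg (fun f : G ≃* G => f x) h
      simpa using this
    calc x * (g⁻¹ * c) = g⁻¹ * (g * x * g⁻¹) * c := by group
      _ = g⁻¹ * (c * x * c⁻¹) * c := by rw [hx]
      _ = g⁻¹ * c * x := by group
  · intro h
    ext x
    simp only [MulAut.conj_apply]
    calc g * x * g⁻¹ = g * (x * (g⁻¹ * c)) * c⁻¹ := by group
      _ = g * (g⁻¹ * c * x) * c⁻¹ := by rw [h x]
      _ = c * x * c⁻¹ := by group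

lemma mymk_eq_of_conj_eq {g c : G} (h : MulAut.conj g = MulAut.conj c) :
    (QuotientGroup.mk g : G ⧸ Subgroup.center G) = QuotientGroup.mk c :=
  (QuotientGroup.eq).2 ((myconj_eq_iff g c).1 h)

lemma conj_comm_phi (φ : G ≃* G) (a : G) :
    MulAut.conj (φ a) * φ = φ * MulAut.conj a := by
  ext x
  show φ a * φ x * (φ a)⁻¹ = φ (a * x * a⁻¹)
  simp [map_mul, map_inv]

lemma conj_formula (φ : G ≃* G) (k h : G) :
    MulAut.conj (h * k * φ h⁻¹) * φ
      = MulAut.conj h * (MulAut.conj k * φ) * (MulAut.conj h)⁻¹ := by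
  have h1 : MulAut.conj (h * k * φ h⁻¹) = MulAut.conj h * MulAut.conj k * MulAut.conj (φ h⁻¹) := by
    rw [map_mul, map_mul]
  have h2 : (MulAut.conj h)⁻¹ = MulAut.conj h⁻¹ := by rw [← map_inv]
  rw [h1, h2, mul_assoc (MulAut.conj h * MulAut.conj k), conj_comm_phi φ h⁻¹]
  group

lemma twistedConj_symm' (φ : G →* G) {x y : G} (h : twistedConj φ x y) :
    twistedConj φ y x := by
  obtain ⟨z, hz⟩ := h
  refine ⟨z⁻¹, ?_⟩
  subst hz
  simp [map_inv]
  group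

end

/-- If `ψ` is the automorphism of `G/Z(G)` induced by an automorphism `φ` of `G`, then
the isogredience classes of automorphisms in the coset `{φ_g ∘ φ : g ∈ G}` are in
bijection with the `ψ`-twisted conjugacy classes of `G/Z(G)`. -/
theorem isogredience_classes_equiv_twistedConj_classes {G : Type*} [Group G]
    (φ : G ≃* G)
    (ψ : (G ⧸ Subgroup.center G) ≃* (G ⧸ Subgroup.center G))
    (hψ : ∀ g : G, ψ (QuotientGroup.mk g) = QuotientGroup.mk (φ g)) :
    Nonempty
      (Quot (fun a b : {θ : G ≃* G // ∃ g : G, θ = MulAut.conj g * φ} =>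
          Isogredient a.1 b.1)
        ≃ Quot (twistedConj (ψ : (G ⧸ Subgroup.center G) →* (G ⧸ Subgroup.center G)))) := by
  set Z := Subgroup.center G
  -- key : mk of twisted-conj formula
  have hψinv : ∀ h : G, (ψ (QuotientGroup.mk h))⁻¹ = (QuotientGroup.mk (φ h⁻¹) : G ⧸ Z) := by
    intro h
    rw [hψ, map_inv, ← QuotientGroup.mk_inv]
  have hmkform : ∀ g h : G,
      (QuotientGroup.mk (h * g * φ h⁻¹) : G ⧸ Z)
        = QuotientGroup.mk h * QuotientGroup.mk g * (ψ (QuotientGroup.mk h))⁻¹ := by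
    intro g h
    rw [hψinv, QuotientGroup.mk_mul, QuotientGroup.mk_mul]
  -- forward map
  have sound1 : ∀ a b : {θ : G ≃* G // ∃ g : G, θ = MulAut.conj g * φ},
      Isogredient a.1 b.1 →
      (Quot.mk (twistedConj (ψ : (G ⧸ Z) →* (G ⧸ Z))) (QuotientGroup.mk a.2.choose) : Quot _)
        = Quot.mk _ (QuotientGroup.mk b.2.choose) := by
    intro a b hab
    obtain ⟨h, hb⟩ := hab
    have ha' := a.2.choose_spec
    have hb' := b.2.choose_spec
    set ga := a.2.choose
    set gb := b.2.choose
    have key : MulAut.conj gb * φ = MulAut.conj (h * ga * φ h⁻¹) * φ := by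
      rw [conj_formula, ← ha', ← hb, hb']
    have hc : MulAut.conj gb = MulAut.conj (h * ga * φ h⁻¹) := mul_right_cancel key
    have hmk : (QuotientGroup.mk gb : G ⧸ Z) = QuotientGroup.mk (h * ga * φ h⁻¹) :=
      mymk_eq_of_conj_eq hc
    apply Quot.sound
    apply twistedConj_symm'
    exact ⟨QuotientGroup.mk h, by rw [hmk, hmkform]; rfl⟩
  let toFun : Quot (fun a b : {θ : G ≃* G // ∃ g : G, θ = MulAut.conj g * φ} =>
      Isogredient a.1 b.1) → Quot (twistedConj (ψ : (G ⧸ Z) →* (G ⧸ Z))) :=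
    Quot.lift (fun a => Quot.mk _ (QuotientGroup.mk a.2.choose)) sound1
  -- inverse map
  let F0 : G → Quot (fun a b : {θ : G ≃* G // ∃ g : G, θ = MulAut.conj g * φ} =>
      Isogredient a.1 b.1) := fun g => Quot.mk _ ⟨MulAut.conj g * φ, g, rfl⟩
  have hcoset : ∀ a b : G, (QuotientGroup.leftRel Z) a b → F0 a = F0 b := by
    intro a b hab
    rw [QuotientGroup.leftRel_apply] at hab
    have : MulAut.conj a = MulAut.conj b := (myconj_eq_iff a b).2 hab
    simp only [F0, this]
  let F : G ⧸ Z → Quot (fun a b : {θ : G ≃* G // ∃ g : G, θ = MulAut.conj g * φ} =>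
      Isogredient a.1 b.1) := Quotient.lift F0 hcoset
  have hF : ∀ g : G, F (QuotientGroup.mk g) = F0 g := fun g => rfl
  have sound2 : ∀ x y : G ⧸ Z, twistedConj (ψ : (G ⧸ Z) →* (G ⧸ Z)) x y → F x = F y := by
    intro x y hxy
    obtain ⟨z, hz⟩ := hxy
    obtain ⟨h, rfl⟩ := QuotientGroup.mk_surjective z
    obtain ⟨gy, rfl⟩ := QuotientGroup.mk_surjective y
    have hx : x = QuotientGroup.mk (h * gy * φ h⁻¹) := by rw [hmkform]; exact hz
    rw [hx, hF, hF]
    apply Quot.sound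
    refine ⟨h⁻¹, ?_⟩
    have := conj_formula φ (h * gy * φ h⁻¹) h⁻¹
    have harg : h⁻¹ * (h * gy * φ h⁻¹) * φ h⁻¹⁻¹ = gy := by
      simp only [map_inv, inv_inv]
      group
    rw [harg] at this
    exact this
  let invFun : Quot (twistedConj (ψ : (G ⧸ Z) →* (G ⧸ Z))) →
      Quot (fun a b : {θ : G ≃* G // ∃ g : G, θ = MulAut.conj g * φ} => Isogredient a.1 b.1) :=
    Quot.lift F sound2
  refine ⟨⟨toFun, invFun, ?_, ?_⟩⟩
  · apply Quot.ind
    intro a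
    have h1a : toFun (Quot.mk _ a) = Quot.mk _ (QuotientGroup.mk a.2.choose) := rfl
    have h1b : invFun (Quot.mk _ (QuotientGroup.mk a.2.choose)) = F0 a.2.choose := rfl
    show invFun (toFun (Quot.mk _ a)) = Quot.mk _ a
    rw [h1a, h1b]
    exact congrArg (Quot.mk _) (Subtype.ext a.2.choose_spec.symm)
  · apply Quot.ind
    intro x
    obtain ⟨g, rfl⟩ := QuotientGroup.mk_surjective x
    have hex : ∃ g' : G, MulAut.conj g * φ = MulAut.conj g' * φ := ⟨g, rfl⟩
    have h2a : invFun (Quot.mk _ (QuotientGroup.mk g)) = F0 g := rfl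
    have h2b : toFun (F0 g) = Quot.mk _ (QuotientGroup.mk
        (Exists.choose ((⟨MulAut.conj g * φ, g, rfl⟩ :
          {θ : G ≃* G // ∃ g : G, θ = MulAut.conj g * φ}).2))) := rfl
    show toFun (invFun (Quot.mk _ (QuotientGroup.mk g))) = Quot.mk _ (QuotientGroup.mk g)
    rw [h2a, h2b]
    have hsp := Exists.choose_spec ((⟨MulAut.conj g * φ, g, rfl⟩ :
          {θ : G ≃* G // ∃ g : G, θ = MulAut.conj g * φ}).2)
    have : MulAut.conj (Exists.choose ((⟨MulAut.conj g * φ, g, rfl⟩ :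
          {θ : G ≃* G // ∃ g : G, θ = MulAut.conj g * φ}).2)) = MulAut.conj g :=
      mul_right_cancel hsp.symm
    exact congrArg (Quot.mk _) (mymk_eq_of_conj_eq this)
end

section
/- Let G and H be groups and let P = G × H be their direct product. Suppose that the subgroup {1} × H of P is invariant under every automorphism of P. If G possesses the R∞-property, then P possesses the R∞-property. -/
/-- If the factor `{1} × H` of `P = G × H` is invariant under every automorphism of
`P` and `G` has the `R∞`-property, then `P` has the `R∞`-property. -/
theorem rInfty_prod_of_left {G H : Type*} [Group G] [Group H]
    (hinv : ∀ φ : (G × H) ≃* (G × H),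
      ((⊥ : Subgroup G).prod (⊤ : Subgroup H)).map (φ : (G × H) →* (G × H)) =
        (⊥ : Subgroup G).prod (⊤ : Subgroup H))
    (hG : RinftyProperty G) : RinftyProperty (G × H) := by
  have hN : ∀ (ρ : (G × H) ≃* (G × H)), (∀ σ : (G × H) ≃* (G × H),
      ((⊥ : Subgroup G).prod (⊤ : Subgroup H)).map (σ : (G × H) →* (G × H)) =
        (⊥ : Subgroup G).prod (⊤ : Subgroup H)) → ∀ h : H, (ρ (1, h)).1 = 1 := by
    intro ρ hinv' h
    have hmem : ((1 : G), h) ∈ (⊥ : Subgroup G).prod (⊤ : Subgroup H) := by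
      simp [Subgroup.mem_prod]
    have hmem2 : ρ (1, h) ∈ (⊥ : Subgroup G).prod (⊤ : Subgroup H) := by
      rw [← hinv' ρ]
      exact ⟨(1, h), hmem, rfl⟩
    simpa [Subgroup.mem_prod] using hmem2.1
  intro φ
  have hNφ : ∀ h : H, (φ (1, h)).1 = 1 := hN φ hinv
  have hNφs : ∀ h : H, (φ.symm (1, h)).1 = 1 := hN φ.symm hinv
  let ψ : G ≃* G :=
  { toFun := fun g => (φ (g, 1)).1
    invFun := fun g => (φ.symm (g, 1)).1
    left_inv := by
      intro g
      have h1 : (((φ (g, 1)).1 : G), (1 : H)) = φ (g, 1) * (1, (φ (g, 1)).2⁻¹) := by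
        simp [Prod.ext_iff]
      simp only [h1, map_mul, MulEquiv.symm_apply_apply, Prod.fst_mul, hNφs, mul_one]
    right_inv := by
      intro g
      have h1 : (((φ.symm (g, 1)).1 : G), (1 : H)) =
          φ.symm (g, 1) * (1, (φ.symm (g, 1)).2⁻¹) := by
        simp [Prod.ext_iff]
      simp only [h1, map_mul, MulEquiv.apply_symm_apply, Prod.fst_mul, hNφ, mul_one]
    map_mul' := by
      intro a b
      show (φ ((a * b : G), (1 : H))).1 = (φ (a, 1)).1 * (φ (b, 1)).1
      have h1 : ((a * b : G), (1 : H)) = (a, (1 : H)) * (b, (1 : H)) := by simp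
      rw [h1, map_mul, Prod.fst_mul] }
  have hfst : ∀ z : G × H, (φ z).1 = ψ z.1 := by
    intro z
    have h1 : φ z = φ (z.1, (1 : H)) * φ ((1 : G), z.2) := by
      rw [← map_mul]; congr 1; simp
    show (φ z).1 = (φ (z.1, 1)).1
    rw [h1, Prod.fst_mul, hNφ, mul_one]
  have key : ∀ x y : G × H, twistedConj (φ : (G × H) →* (G × H)) x y →
      Quot.mk (twistedConj (ψ : G →* G)) x.1 = Quot.mk (twistedConj (ψ : G →* G)) y.1 := by
    rintro x y ⟨z, hz⟩
    apply Quot.sound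
    refine ⟨z.1, ?_⟩
    have h2 := congrArg Prod.fst hz
    simpa [hfst z] using h2
  let F : Quot (twistedConj (φ : (G × H) →* (G × H))) → Quot (twistedConj (ψ : G →* G)) :=
    Quot.lift (fun p => Quot.mk (twistedConj (ψ : G →* G)) p.1) key
  have hF : Function.Surjective F := by
    intro q
    induction q using Quot.ind with
    | _ g => exact ⟨Quot.mk _ (g, 1), rfl⟩
  have hInf : Infinite (Quot (twistedConj (ψ : G →* G))) := hG ψ
  show Infinite (Quot (twistedConj (φ : (G × H) →* (G × H))))
  exact Infinite.of_injective _ (Function.injective_surjInv hF)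
end
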